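/- Fix T > 0 and define R(t,g) as above. For all t < T and real g, the second partial derivative of R in t satisfies ∂_{tt} R(t,g) ≤ (√2/(8√π))·(T−t)^{−3/2}. -/

import Mathlib

open Real intervalIntegral

noncomputable def erfc (z : ℝ) : ℝ :=
  1 - (2 / Real.sqrt Real.pi) * ∫ x in (0:ℝ)..z, Real.exp (-x ^ 2)

noncomputable def Q (T t g : ℝ) : ℝ :=
  (1 / 2) * erfc (g / Real.sqrt (2 * (T - t)))

noncomputable def R (T t g : ℝ) : ℝ :=
  (g / 2) * erfc (g / Real.sqrt (2 * (T - t)))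
    - Real.sqrt ((T - t) / (2 * Real.pi)) * Real.exp (-g ^ 2 / (2 * (T - t)))
    + Real.sqrt (T / (2 * Real.pi))

lemma hasDerivAt_gauss_integral (z : ℝ) :
    HasDerivAt (fun z => ∫ x in (0:ℝ)..z, Real.exp (-x^2)) (Real.exp (-z^2)) z := by
  have hc : Continuous fun x : ℝ => Real.exp (-x^2) := by continuity
  exact intervalIntegral.integral_hasDerivAt_right (hc.intervalIntegrable _ _)
    hc.aestronglyMeasurable.stronglyMeasurableAtFilter hc.continuousAt

lemma hasDerivAt_erfc (z : ℝ) :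
    HasDerivAt erfc (-(2 / Real.sqrt Real.pi * Real.exp (-z^2))) z := by
  have h := ((hasDerivAt_gauss_integral z).const_mul (2 / Real.sqrt Real.pi)).const_sub 1
  exact h

noncomputable def Fd (T g s : ℝ) : ℝ :=
  Real.exp (-g^2/(2*(T-s))) / (2 * Real.sqrt Real.pi * Real.sqrt (2*(T-s)))

lemma hasDerivAt_R (T g s : ℝ) (hs : s < T) :
    HasDerivAt (fun x => R T x g) (Fd T g s) s := by
  have hu : (0:ℝ) < T - s := by linarith
  have h2u : (0:ℝ) < 2*(T-s) := by linarith
  set r := Real.sqrt (T - s) with hr_def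
  have hr : 0 < r := Real.sqrt_pos.mpr hu
  have hr2 : r^2 = T - s := Real.sq_sqrt hu.le
  have hs2 : Real.sqrt 2 > 0 := by positivity
  have hsp : Real.sqrt Real.pi > 0 := Real.sqrt_pos.mpr Real.pi_pos
  have h22 : Real.sqrt 2 ^ 2 = 2 := Real.sq_sqrt (by norm_num)
  have hpp : Real.sqrt Real.pi ^ 2 = Real.pi := Real.sq_sqrt Real.pi_pos.le
  have hv : Real.sqrt (2*(T-s)) = Real.sqrt 2 * r := Real.sqrt_mul (by norm_num) _
  have hw : Real.sqrt ((T-s)/(2*Real.pi)) = r / (Real.sqrt 2 * Real.sqrt Real.pi) := by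
    rw [Real.sqrt_div hu.le, Real.sqrt_mul (by norm_num)]
  -- linear inner functions
  have hlin : HasDerivAt (fun x : ℝ => 2*(T-x)) (-2) s := by
    simpa using ((hasDerivAt_id s).const_sub T).const_mul 2
  have hvpos : 0 < Real.sqrt (2*(T-s)) := Real.sqrt_pos.mpr h2u
  have hsqrt : HasDerivAt (fun x => Real.sqrt (2*(T-x))) (-(Real.sqrt (2*(T-s)))⁻¹) s := by
    have := (Real.hasDerivAt_sqrt (ne_of_gt h2u)).comp s hlin
    refine this.congr_deriv (Eq.symm ?_)
    field_simp
  have hu_fun : HasDerivAt (fun x => g / Real.sqrt (2*(T-x))) (g / Real.sqrt (2*(T-s))^3) s := by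
    have := (hsqrt.inv hvpos.ne').const_mul g
    simp only [div_eq_mul_inv]
    refine this.congr_deriv (Eq.symm ?_)
    field_simp
  have herfc : HasDerivAt (fun x => erfc (g / Real.sqrt (2*(T-x))))
      (-(2 / Real.sqrt Real.pi * Real.exp (-(g / Real.sqrt (2*(T-s)))^2)) * (g / Real.sqrt (2*(T-s))^3)) s :=
    (hasDerivAt_erfc _).comp s hu_fun
  have hinv2 : HasDerivAt (fun x => -g^2 / (2*(T-x))) (-g^2 * (2 / (2*(T-s))^2)) s := by
    have := (hlin.inv h2u.ne').const_mul (-g^2)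
    simp only [div_eq_mul_inv]
    refine this.congr_deriv (Eq.symm ?_)
    ring
  have hexp : HasDerivAt (fun x => Real.exp (-g^2/(2*(T-x))))
      (Real.exp (-g^2/(2*(T-s))) * (-g^2 * (2 / (2*(T-s))^2))) s := hinv2.exp
  have hwin : HasDerivAt (fun x : ℝ => (T-x)/(2*Real.pi)) (-1/(2*Real.pi)) s := by
    simpa using ((hasDerivAt_id s).const_sub T).div_const (2*Real.pi)
  have hwpos : (0:ℝ) < (T-s)/(2*Real.pi) := by positivity
  have hwsqrt : HasDerivAt (fun x => Real.sqrt ((T-x)/(2*Real.pi)))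
      (1 / (2 * Real.sqrt ((T-s)/(2*Real.pi))) * (-1/(2*Real.pi))) s := by
    exact (Real.hasDerivAt_sqrt hwpos.ne').comp s hwin
  have hprod := hwsqrt.mul hexp
  have htot := ((herfc.const_mul (g/2)).sub hprod).add_const (Real.sqrt (T/(2*Real.pi)))
  have hRfun : (fun x => (g/2) * erfc (g / Real.sqrt (2*(T-x)))
      - Real.sqrt ((T-x)/(2*Real.pi)) * Real.exp (-g^2/(2*(T-x)))
      + Real.sqrt (T/(2*Real.pi))) = fun x => R T x g := by
    funext x; simp [R]
  rw [← hRfun]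
  refine htot.congr_deriv (Eq.symm ?_)
  -- value equality
  have hE : Real.exp (-(g / Real.sqrt (2*(T-s)))^2) = Real.exp (-g^2/(2*(T-s))) := by
    congr 1
    rw [div_pow, Real.sq_sqrt h2u.le]
    ring
  have hπ : Real.pi = Real.sqrt Real.pi ^ 2 := hpp.symm
  rw [Fd, hE, hv, hw, show (T - s) = r^2 from hr2.symm, hπ]
  set E := Real.exp (-g^2/(2*r^2)) with hE_def
  set a := Real.sqrt 2 with ha_def
  set b := Real.sqrt Real.pi with hb_def
  field_simp
  rw [Real.sqrt_sq hsp.le]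
  linear_combination (-E*b^2*r^2*a^2 - 2*E*b^2*g^2) * h22


lemma hasDerivAt_Fd (T g t : ℝ) (ht : t < T) :
    HasDerivAt (Fd T g)
      (Real.exp (-g^2/(2*(T-t))) * ((T-t) - g^2) /
        (4 * Real.sqrt 2 * Real.sqrt Real.pi * (T-t)^2 * Real.sqrt (T-t))) t := by
  have hu : (0:ℝ) < T - t := by linarith
  have h2u : (0:ℝ) < 2*(T-t) := by linarith
  set r := Real.sqrt (T - t) with hr_def
  have hr : 0 < r := Real.sqrt_pos.mpr hu
  have hr2 : r^2 = T - t := Real.sq_sqrt hu.le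
  have hs2 : Real.sqrt 2 > 0 := by positivity
  have hsp : Real.sqrt Real.pi > 0 := Real.sqrt_pos.mpr Real.pi_pos
  have h22 : Real.sqrt 2 ^ 2 = 2 := Real.sq_sqrt (by norm_num)
  have hv : Real.sqrt (2*(T-t)) = Real.sqrt 2 * r := Real.sqrt_mul (by norm_num) _
  have hvpos : 0 < Real.sqrt (2*(T-t)) := Real.sqrt_pos.mpr h2u
  have hlin : HasDerivAt (fun x : ℝ => 2*(T-x)) (-2) t := by
    simpa using ((hasDerivAt_id t).const_sub T).const_mul 2
  have hsqrt : HasDerivAt (fun x => Real.sqrt (2*(T-x))) (-(Real.sqrt (2*(T-t)))⁻¹) t := by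
    have := (Real.hasDerivAt_sqrt (ne_of_gt h2u)).comp t hlin
    refine this.congr_deriv (Eq.symm ?_)
    field_simp
  have hinv2 : HasDerivAt (fun x => -g^2 / (2*(T-x))) (-g^2 * (2 / (2*(T-t))^2)) t := by
    have := (hlin.inv h2u.ne').const_mul (-g^2)
    simp only [div_eq_mul_inv]
    refine this.congr_deriv (Eq.symm ?_)
    ring
  have hexp : HasDerivAt (fun x => Real.exp (-g^2/(2*(T-x))))
      (Real.exp (-g^2/(2*(T-t))) * (-g^2 * (2 / (2*(T-t))^2))) t := hinv2.exp
  have hden : HasDerivAt (fun x => 2 * Real.sqrt Real.pi * Real.sqrt (2*(T-x)))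
      (2 * Real.sqrt Real.pi * (-(Real.sqrt (2*(T-t)))⁻¹)) t := hsqrt.const_mul _
  have hdenne : 2 * Real.sqrt Real.pi * Real.sqrt (2*(T-t)) ≠ 0 := by positivity
  have htot := hexp.div hden hdenne
  refine htot.congr_deriv (Eq.symm ?_)
  set E := Real.exp (-g^2/(2*(T-t))) with hE_def
  set a := Real.sqrt 2 with ha_def
  set b := Real.sqrt Real.pi with hb_def
  rw [hv, show (T - t) = r^2 from hr2.symm]
  field_simp
  ring_nf
  linear_combination ((4:ℝ)*E*r^2) * h22

theorem second_time_deriv_R_bound (T : ℝ) (hT : 0 < T) (t g : ℝ) (htT : t < T) :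
    iteratedDeriv 2 (fun s => R T s g) t
      ≤ (Real.sqrt 2 / (8 * Real.sqrt Real.pi)) * (T - t) ^ (-(3:ℝ)/2) := by
  have hu : (0:ℝ) < T - t := by linarith
  set r := Real.sqrt (T - t) with hr_def
  have hr : 0 < r := Real.sqrt_pos.mpr hu
  have hr2 : r^2 = T - t := Real.sq_sqrt hu.le
  have hs2 : Real.sqrt 2 > 0 := by positivity
  have hsp : Real.sqrt Real.pi > 0 := Real.sqrt_pos.mpr Real.pi_pos
  have h22 : Real.sqrt 2 ^ 2 = 2 := Real.sq_sqrt (by norm_num)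
  have h1 : iteratedDeriv 2 (fun s => R T s g) t
      = deriv (deriv (fun s => R T s g)) t := by
    rw [iteratedDeriv_succ, iteratedDeriv_one]
  have hev : deriv (fun s => R T s g) =ᶠ[nhds t] Fd T g := by
    filter_upwards [Iio_mem_nhds htT] with s hs
    exact (hasDerivAt_R T g s hs).deriv
  have h2 : deriv (deriv (fun s => R T s g)) t = deriv (Fd T g) t := hev.deriv_eq
  have h3 : deriv (Fd T g) t
      = Real.exp (-g^2/(2*(T-t))) * ((T-t) - g^2) /
        (4 * Real.sqrt 2 * Real.sqrt Real.pi * (T-t)^2 * Real.sqrt (T-t)) :=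
    (hasDerivAt_Fd T g t htT).deriv
  have hrp : (T - t) ^ (-(3:ℝ)/2) = (r^3)⁻¹ := by
    rw [show (-(3:ℝ)/2) = -(3/2 : ℝ) by norm_num, Real.rpow_neg hu.le]
    congr 1
    rw [show ((3:ℝ)/2) = (1/2 : ℝ) * 3 by norm_num, Real.rpow_mul hu.le,
      ← Real.sqrt_eq_rpow, ← hr_def, ← Real.rpow_natCast r 3]
    norm_num
  rw [h1, h2, h3, hrp]
  have hEpos : 0 < Real.exp (-g^2/(2*(T-t))) := Real.exp_pos _
  have hE1 : Real.exp (-g^2/(2*(T-t))) ≤ 1 := by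
    rw [show (1:ℝ) = Real.exp 0 from (Real.exp_zero).symm]
    apply Real.exp_le_exp.mpr
    apply div_nonpos_of_nonpos_of_nonneg
    · simpa using sq_nonneg g
    · linarith
  have key : Real.exp (-g^2/(2*(T-t))) * ((T-t) - g^2) ≤ (T-t) := by
    nlinarith [mul_nonneg hEpos.le (sq_nonneg g),
      mul_nonneg (sub_nonneg.2 hE1) hu.le]
  have hpos : (0:ℝ) < 4 * Real.sqrt 2 * Real.sqrt Real.pi * (T-t)^2 * Real.sqrt (T-t) := by
    positivity
  calc Real.exp (-g^2/(2*(T-t))) * ((T-t) - g^2) /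
        (4 * Real.sqrt 2 * Real.sqrt Real.pi * (T-t)^2 * Real.sqrt (T-t))
      ≤ (T-t) / (4 * Real.sqrt 2 * Real.sqrt Real.pi * (T-t)^2 * Real.sqrt (T-t)) :=
        (div_le_div_iff_of_pos_right hpos).mpr key
    _ = Real.sqrt 2 / (8 * Real.sqrt Real.pi) * (r^3)⁻¹ := by
        rw [show (T-t) = r^2 from hr2.symm, Real.sqrt_sq hr.le]
        field_simp
        linear_combination (-(4:ℝ)) * h22
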